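/- Let k be a field and S = k[x₁,x₂,x₃,x₄,y₁,y₂,y₃,y₄]. Let ∂⁻² : S² → S³ be the S-linear map given by the matrix with rows (x₂y₄, x₄y₂), (y₁, x₁), (y₃, x₃), and let ∂⁻¹ : S³ → S be the S-linear map given by the row vector (x₃y₁ − x₁y₃, x₄y₂y₃ − x₂x₃y₄, x₁x₂y₄ − x₄y₁y₂). Then the sequence 0 → S² → S³ → S → S/J → 0 is exact, where J = ⟨x₃y₁ − x₁y₃, x₄y₂y₃ − x₂x₃y₄, x₁x₂y₄ − x₄y₁y₂⟩: that is, ∂⁻² is injective, the kernel of ∂⁻¹ equals the image of ∂⁻², and the image of ∂⁻¹ equals J. -/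

import Mathlib

/-!
STATEMENT 5: the cellular complex `0 → S² → S³ → S → S/J → 0` for `Bl_p ℙ²` is exact:
`∂⁻²` is injective, `ker ∂⁻¹ = im ∂⁻²`, and `im ∂⁻¹ = J` for
`J = ⟨x₃y₁ − x₁y₃, x₄y₂y₃ − x₂x₃y₄, x₁x₂y₄ − x₄y₁y₂⟩`.
-/

noncomputable section

open MvPolynomial

/-- The polynomial ring `S = k[x₁,…,x₄,y₁,…,y₄]`; `Sum.inl i ↦ xᵢ₊₁`, `Sum.inr i ↦ yᵢ₊₁`. -/
abbrev PolyS (k : Type*) [Field k] := MvPolynomial (Fin 4 ⊕ Fin 4) k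

/-- `xᵢ₊₁` (0-indexed). -/
def xv (k : Type*) [Field k] (i : Fin 4) : PolyS k := X (Sum.inl i)

/-- `yᵢ₊₁` (0-indexed). -/
def yv (k : Type*) [Field k] (i : Fin 4) : PolyS k := X (Sum.inr i)

/-- `∂⁻² : S² → S³`, the matrix with rows `(x₂y₄, x₄y₂)`, `(y₁, x₁)`, `(y₃, x₃)`. -/
def dTwo (k : Type*) [Field k] : (Fin 2 → PolyS k) →ₗ[PolyS k] (Fin 3 → PolyS k) :=
  (Matrix.of
    ![![xv k 1 * yv k 3, xv k 3 * yv k 1],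
      ![yv k 0, xv k 0],
      ![yv k 2, xv k 2]]).mulVecLin

/-- `∂⁻¹ : S³ → S`, given by the row vector
`(x₃y₁ − x₁y₃, x₄y₂y₃ − x₂x₃y₄, x₁x₂y₄ − x₄y₁y₂)`. -/
def dOne (k : Type*) [Field k] : (Fin 3 → PolyS k) →ₗ[PolyS k] PolyS k :=
  (xv k 2 * yv k 0 - xv k 0 * yv k 2) • LinearMap.proj 0
    + (xv k 3 * yv k 1 * yv k 2 - xv k 1 * xv k 2 * yv k 3) • LinearMap.proj 1
    + (xv k 0 * xv k 1 * yv k 3 - xv k 3 * yv k 0 * yv k 1) • LinearMap.proj 2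


/-! ### Auxiliary lemmas -/

lemma alg_prime_iff' {k A B : Type*} [CommSemiring k] [CommRing A] [CommRing B]
    [Algebra k A] [Algebra k B] (e : A ≃ₐ[k] B) (p : A) : Prime p ↔ Prime (e p) :=
  (MulEquiv.prime_iff e.toMulEquiv).symm

lemma primeX' (k : Type*) [Field k] {n : ℕ} (i : Fin (n+1)) :
    Prime (X i : MvPolynomial (Fin (n+1)) k) := by
  rw [alg_prime_iff' ((renameEquiv k (Equiv.swap i 0)).trans (finSuccEquiv k n))]
  have h : ((renameEquiv k (Equiv.swap i 0)).trans (finSuccEquiv k n)) (X i)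
      = Polynomial.X := by
    rw [AlgEquiv.trans_apply, renameEquiv_apply, rename_X, Equiv.swap_apply_left,
      finSuccEquiv_X_zero]
  rw [h]
  exact Polynomial.prime_X

lemma prime_linear' {A : Type*} [CommRing A] [IsDomain A] [UniqueFactorizationMonoid A]
    {c e : A} (hc : Prime c) (hce : ¬ c ∣ e) :
    Prime (Polynomial.C c * Polynomial.X - Polynomial.C e) := by
  rw [← UniqueFactorizationMonoid.irreducible_iff_prime]
  have hdeg : (Polynomial.C c * Polynomial.X - Polynomial.C e).degree = 1 := by
    rw [sub_eq_add_neg, ← Polynomial.C_neg]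
    exact Polynomial.degree_linear hc.ne_zero
  constructor
  · exact Polynomial.not_isUnit_of_degree_pos _ (by rw [hdeg]; norm_num)
  · intro p q hpq
    have hf0 : Polynomial.C c * Polynomial.X - Polynomial.C e ≠ 0 := by
      intro h; rw [h] at hdeg; simp at hdeg
    have hp0 : p ≠ 0 := by rintro rfl; simp at hpq; exact hf0 hpq
    have hq0 : q ≠ 0 := by rintro rfl; simp at hpq; exact hf0 hpq
    have hnd : p.natDegree + q.natDegree = 1 := by
      have h2 := Polynomial.natDegree_mul hp0 hq0
      rw [← hpq] at h2
      rw [← h2]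
      have h3 : (Polynomial.C c * Polynomial.X - Polynomial.C e).natDegree = 1 :=
        Polynomial.natDegree_eq_of_degree_eq_some hdeg
      omega
    have key : ∀ r s : Polynomial A,
        Polynomial.C c * Polynomial.X - Polynomial.C e = r * s →
        r.natDegree = 0 → IsUnit r := by
      intro r s hrs hr
      obtain ⟨u, rfl⟩ := Polynomial.natDegree_eq_zero.mp hr
      have h1 : u * s.coeff 1 = c := by
        have h4 := congrArg (fun f => Polynomial.coeff f 1) hrs
        simpa using h4.symm
      have h0 : u * s.coeff 0 = -e := by
        have h4 := congrArg (fun f => Polynomial.coeff f 0) hrs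
        simpa using h4.symm
      have hu_dvd_e : u ∣ e := by
        refine ⟨-(s.coeff 0), ?_⟩
        rw [mul_neg, h0, neg_neg]
      obtain ⟨w, hw⟩ : u ∣ c := ⟨s.coeff 1, h1.symm⟩
      rcases hc.irreducible.isUnit_or_isUnit hw with h | h
      · exact h.map Polynomial.C
      · exfalso
        apply hce
        obtain ⟨z, hz⟩ := h.exists_left_inv
        have h5 : c ∣ u := ⟨z, by rw [hw, mul_assoc, mul_comm w z, hz, mul_one]⟩
        exact h5.trans hu_dvd_e
    rcases Nat.eq_zero_or_pos p.natDegree with h | h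
    · exact Or.inl (key p q hpq h)
    · right
      have h6 : q.natDegree = 0 := by omega
      exact key q p (by rw [hpq, mul_comm]) h6

/-- The bijection sending `y₁` to the last coordinate. -/
abbrev epsEquiv : (Fin 4 ⊕ Fin 4) ≃ Fin 8 :=
  Equiv.ofBijective (Sum.elim ![1,2,3,4] ![0,5,6,7]) (by decide)

/-- `S ≃ (k[7 vars])[Y]` with `Y = y₁`. -/
def EE (k : Type*) [Field k] :
    MvPolynomial (Fin 4 ⊕ Fin 4) k ≃ₐ[k] Polynomial (MvPolynomial (Fin 7) k) :=
  (renameEquiv k epsEquiv).trans (finSuccEquiv k 7)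

lemma EEg1 (k : Type*) [Field k] :
    EE k (X (Sum.inl 2) * X (Sum.inr 0) - X (Sum.inl 0) * X (Sum.inr 2)
      : MvPolynomial (Fin 4 ⊕ Fin 4) k)
    = Polynomial.C (X 2) * Polynomial.X - Polynomial.C (X 0 * X 5) := by
  simp only [EE, map_sub, map_mul, AlgEquiv.trans_apply, renameEquiv_apply, rename_X]
  rw [show (epsEquiv (Sum.inl 2) : Fin 8) = Fin.succ 2 from rfl,
      show (epsEquiv (Sum.inr 0) : Fin 8) = 0 from rfl,
      show (epsEquiv (Sum.inl 0) : Fin 8) = Fin.succ 0 from rfl,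
      show (epsEquiv (Sum.inr 2) : Fin 8) = Fin.succ 5 from rfl,
      finSuccEquiv_X_zero, finSuccEquiv_X_succ, finSuccEquiv_X_succ,
      finSuccEquiv_X_succ]

lemma notdvd' (k : Type*) [Field k] :
    ¬ (X 2 : MvPolynomial (Fin 7) k) ∣ (X 0 * X 5) := by
  intro ⟨q, hq⟩
  have h := congrArg (eval ![1,1,0,1,1,1,1]) hq
  simp at h

lemma prime_g1' (k : Type*) [Field k] :
    Prime (xv k 2 * yv k 0 - xv k 0 * yv k 2) := by
  show Prime (X (Sum.inl 2) * X (Sum.inr 0) - X (Sum.inl 0) * X (Sum.inr 2)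
    : MvPolynomial (Fin 4 ⊕ Fin 4) k)
  rw [alg_prime_iff' (EE k), EEg1]
  exact prime_linear' (primeX' k 2) (notdvd' k)

lemma g1_notdvd_g2 (k : Type*) [Field k] :
    ¬ (xv k 2 * yv k 0 - xv k 0 * yv k 2)
      ∣ (xv k 3 * yv k 1 * yv k 2 - xv k 1 * xv k 2 * yv k 3) := by
  intro ⟨q, hq⟩
  have h := congrArg (eval (Sum.elim ![0,0,0,1] ![0,1,1,0])) hq
  simp [xv, yv] at h

theorem cellular_resolution_exact (k : Type*) [Field k] :
    Function.Injective (dTwo k)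
      ∧ LinearMap.ker (dOne k) = LinearMap.range (dTwo k)
      ∧ LinearMap.range (dOne k)
          = Ideal.span
              { xv k 2 * yv k 0 - xv k 0 * yv k 2,
                xv k 3 * yv k 1 * yv k 2 - xv k 1 * xv k 2 * yv k 3,
                xv k 0 * xv k 1 * yv k 3 - xv k 3 * yv k 0 * yv k 1 } := by
  classical
  have hprime : Prime (xv k 2 * yv k 0 - xv k 0 * yv k 2) := prime_g1' k
  have hg10 : (xv k 2 * yv k 0 - xv k 0 * yv k 2) ≠ 0 := hprime.ne_zero
  refine ⟨?_, ?_, ?_⟩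
  · -- injectivity of dTwo
    rw [← LinearMap.ker_eq_bot]
    rw [LinearMap.ker_eq_bot']
    intro u hu
    have h1 : yv k 0 * u 0 + xv k 0 * u 1 = 0 := by
      have h := congrFun hu 1
      simpa [dTwo, Matrix.mulVecLin_apply, Matrix.mulVec, dotProduct,
        Fin.sum_univ_two] using h
    have h2 : yv k 2 * u 0 + xv k 2 * u 1 = 0 := by
      have h := congrFun hu 2
      simpa [dTwo, Matrix.mulVecLin_apply, Matrix.mulVec, dotProduct,
        Fin.sum_univ_two] using h
    have hu0 : u 0 = 0 := by
      have h3 : (xv k 2 * yv k 0 - xv k 0 * yv k 2) * u 0 = 0 := by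
        linear_combination (xv k 2) * h1 - (xv k 0) * h2
      rcases mul_eq_zero.mp h3 with h | h
      · exact absurd h hg10
      · exact h
    have hu1 : u 1 = 0 := by
      have h3 : (xv k 2 * yv k 0 - xv k 0 * yv k 2) * u 1 = 0 := by
        linear_combination (yv k 0) * h2 - (yv k 2) * h1
      rcases mul_eq_zero.mp h3 with h | h
      · exact absurd h hg10
      · exact h
    funext i
    fin_cases i
    · simpa using hu0
    · simpa using hu1
  · -- ker dOne = range dTwo
    apply le_antisymm
    · intro v hv
      have hE : (xv k 2 * yv k 0 - xv k 0 * yv k 2) * v 0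
          + (xv k 3 * yv k 1 * yv k 2 - xv k 1 * xv k 2 * yv k 3) * v 1
          + (xv k 0 * xv k 1 * yv k 3 - xv k 3 * yv k 0 * yv k 1) * v 2 = 0 := by
        have h := LinearMap.mem_ker.mp hv
        simpa [dOne] using h
      have hd1 : (xv k 2 * yv k 0 - xv k 0 * yv k 2)
          ∣ (xv k 2 * v 1 - xv k 0 * v 2) := by
        have hdvd : (xv k 2 * yv k 0 - xv k 0 * yv k 2)
            ∣ (xv k 2 * v 1 - xv k 0 * v 2)
              * (xv k 3 * yv k 1 * yv k 2 - xv k 1 * xv k 2 * yv k 3) := by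
          refine ⟨v 2 * (xv k 3 * yv k 1) - v 0 * xv k 2, ?_⟩
          linear_combination (xv k 2) * hE
        exact (hprime.dvd_or_dvd hdvd).resolve_right (g1_notdvd_g2 k)
      have hd2 : (xv k 2 * yv k 0 - xv k 0 * yv k 2)
          ∣ (yv k 0 * v 2 - yv k 2 * v 1) := by
        have hdvd : (xv k 2 * yv k 0 - xv k 0 * yv k 2)
            ∣ (yv k 0 * v 2 - yv k 2 * v 1)
              * (xv k 3 * yv k 1 * yv k 2 - xv k 1 * xv k 2 * yv k 3) := by
          refine ⟨v 0 * yv k 2 - v 2 * (xv k 1 * yv k 3), ?_⟩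
          linear_combination (- yv k 2) * hE
        exact (hprime.dvd_or_dvd hdvd).resolve_right (g1_notdvd_g2 k)
      obtain ⟨s, hs⟩ := hd1
      obtain ⟨t, ht⟩ := hd2
      refine ⟨![s, t], ?_⟩
      funext i
      fin_cases i
      · show dTwo k ![s, t] 0 = v 0
        have h0 : dTwo k ![s, t] 0 = xv k 1 * yv k 3 * s + xv k 3 * yv k 1 * t := by
          simp [dTwo, Matrix.mulVecLin_apply, Matrix.mulVec, dotProduct,
            Fin.sum_univ_two]
        rw [h0]
        apply mul_left_cancel₀ hg10
        linear_combination (-(xv k 1 * yv k 3)) * hs - (xv k 3 * yv k 1) * ht - hE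
      · show dTwo k ![s, t] 1 = v 1
        have h0 : dTwo k ![s, t] 1 = yv k 0 * s + xv k 0 * t := by
          simp [dTwo, Matrix.mulVecLin_apply, Matrix.mulVec, dotProduct,
            Fin.sum_univ_two]
        rw [h0]
        apply mul_left_cancel₀ hg10
        linear_combination (-(yv k 0)) * hs - (xv k 0) * ht
      · show dTwo k ![s, t] 2 = v 2
        have h0 : dTwo k ![s, t] 2 = yv k 2 * s + xv k 2 * t := by
          simp [dTwo, Matrix.mulVecLin_apply, Matrix.mulVec, dotProduct,
            Fin.sum_univ_two]
        rw [h0]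
        apply mul_left_cancel₀ hg10
        linear_combination (-(yv k 2)) * hs - (xv k 2) * ht
    · rintro _ ⟨u, rfl⟩
      rw [LinearMap.mem_ker]
      have h0 : dTwo k u 0 = xv k 1 * yv k 3 * u 0 + xv k 3 * yv k 1 * u 1 := by
        simp [dTwo, Matrix.mulVecLin_apply, Matrix.mulVec, dotProduct,
          Fin.sum_univ_two]
      have h1 : dTwo k u 1 = yv k 0 * u 0 + xv k 0 * u 1 := by
        simp [dTwo, Matrix.mulVecLin_apply, Matrix.mulVec, dotProduct,
          Fin.sum_univ_two]
      have h2 : dTwo k u 2 = yv k 2 * u 0 + xv k 2 * u 1 := by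
        simp [dTwo, Matrix.mulVecLin_apply, Matrix.mulVec, dotProduct,
          Fin.sum_univ_two]
      have hD : dOne k (dTwo k u)
          = (xv k 2 * yv k 0 - xv k 0 * yv k 2) * dTwo k u 0
            + (xv k 3 * yv k 1 * yv k 2 - xv k 1 * xv k 2 * yv k 3) * dTwo k u 1
            + (xv k 0 * xv k 1 * yv k 3 - xv k 3 * yv k 0 * yv k 1) * dTwo k u 2 := by
        simp [dOne]
      rw [hD, h0, h1, h2]
      ring
  · -- range dOne = span
    apply le_antisymm
    · rintro _ ⟨v, rfl⟩
      have hD : dOne k v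
          = v 0 * (xv k 2 * yv k 0 - xv k 0 * yv k 2)
            + v 1 * (xv k 3 * yv k 1 * yv k 2 - xv k 1 * xv k 2 * yv k 3)
            + v 2 * (xv k 0 * xv k 1 * yv k 3 - xv k 3 * yv k 0 * yv k 1) := by
        simp [dOne]; ring
      rw [hD]
      refine Ideal.add_mem _ (Ideal.add_mem _ ?_ ?_) ?_
      · exact Ideal.mul_mem_left _ _ (Ideal.subset_span (by left; rfl))
      · exact Ideal.mul_mem_left _ _ (Ideal.subset_span (by right; left; rfl))
      · exact Ideal.mul_mem_left _ _ (Ideal.subset_span (by right; right; rfl))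
    · rw [Ideal.span_le]
      intro p hp
      rcases hp with rfl | rfl | rfl
      · refine ⟨![1, 0, 0], ?_⟩
        simp [dOne]
      · refine ⟨![0, 1, 0], ?_⟩
        simp [dOne]
      · refine ⟨![0, 0, 1], ?_⟩
        simp [dOne]

end
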